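/- arXiv:1111.0376 — 7 statements merged into one kernel-verified Lean document; each statement's English description precedes it below -/
import Mathlib

section
/- Let w^{i}_{r,t} denote the number of one-dimensional walks from 0 to i consisting of t steps of length 2 and r − 2t steps of length 1 (each step going left or right). If r − 2t is an even positive integer and i ≥ 0, then w^{2i}_{r,t} ≥ w^{2(i+1)}_{r,t}. In particular, if r is divisible by 4 then w^{0}_{r,t} ≥ w^{2}_{r,t}. -/
open Finset

/-- `walkCount t m i` is the number of one-dimensional walks consisting of `t` steps of
length 2 and `m` steps of length 1 (each going left or right) whose signed sum is `i`;
so `w^{i}_{r,t} = walkCount t (r - 2t) i`. -/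
def walkCount (t m : ℕ) (i : ℤ) : ℕ :=
  ((Finset.univ : Finset ((Fin t → Bool) × (Fin m → Bool))).filter
    (fun p => (∑ k, (if p.1 k then (2 : ℤ) else -2)) +
              (∑ k, (if p.2 k then (1 : ℤ) else -1)) = i)).card

/-!
Appending a `±1` step turns the distribution `f` of end points into `i ↦ f (i - 1) + f (i + 1)`.
For even `f` this preserves `f (i + 2) ≤ f i` (`i ≥ 0`), which holds for the empty walk, hence for
all walks of `±1` steps. The walks of `±2` steps are these scaled by two, so their distribution
satisfies `f (j + 4) ≤ f j` for `j ≥ -1`, and one `±1` step turns this into `f (i + 2) ≤ f i`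
for `i ≥ 0`.
-/

section NeighbourSum

variable {α : Type*} [AddCommMonoid α] [PartialOrder α] [IsOrderedAddMonoid α] {f : ℤ → α}

def neighbourSum (f : ℤ → α) (i : ℤ) : α := f (i - 1) + f (i + 1)

theorem neighbourSum_add_two_le_of_add_four_le (hf : ∀ j, -1 ≤ j → f (j + 4) ≤ f j) {i : ℤ}
    (hi : 0 ≤ i) : neighbourSum f (i + 2) ≤ neighbourSum f i :=
  calc neighbourSum f (i + 2) = f (i - 1 + 4) + f (i + 1) := by
        rw [neighbourSum, add_comm]; congr 2 <;> ring
    _ ≤ f (i - 1) + f (i + 1) := add_le_add_left (hf (i - 1) (by omega)) _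

theorem neighbourSum_add_two_le (heven : Function.Even f) (hf : ∀ i, 0 ≤ i → f (i + 2) ≤ f i)
    {i : ℤ} (hi : 0 ≤ i) : neighbourSum f (i + 2) ≤ neighbourSum f i := by
  have hleft : f (i + 1) ≤ f (i - 1) := by
    rcases hi.eq_or_lt with rfl | hi
    · simpa using (heven 1).ge
    · convert hf (i - 1) (by omega) using 2; ring
  calc neighbourSum f (i + 2) = f (i + 1) + f (i + 1 + 2) := by
        rw [neighbourSum]; congr 2 <;> ring
    _ ≤ f (i - 1) + f (i + 1) := add_le_add hleft (hf (i + 1) (by omega))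

end NeighbourSum

theorem sum_ite_not {ι G : Type*} [Fintype ι] [AddCommGroup G] (c : G) (f : ι → Bool) :
    ∑ k, (if !f k then c else -c) = -∑ k, (if f k then c else -c) := by
  rw [← sum_neg_distrib]
  congr! 1 with k
  cases f k <;> simp

theorem sum_ite_cons {G : Type*} [AddCommGroup G] {m : ℕ} (c : G) (b : Bool) (g : Fin m → Bool) :
    ∑ k, (if (Fin.cons b g : Fin (m + 1) → Bool) k then c else -c) =
      (if b then c else -c) + ∑ k, (if g k then c else -c) := by
  simp [Fin.sum_univ_succ]

theorem sum_ite_two_eq_two_mul {ι : Type*} [Fintype ι] (f : ι → Bool) :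
    ∑ k, (if f k then (2 : ℤ) else -2) = 2 * ∑ k, (if f k then (1 : ℤ) else -1) := by
  rw [mul_sum]
  congr! 1 with k
  split_ifs <;> norm_num

theorem walkCount_neg (t m : ℕ) (i : ℤ) : walkCount t m (-i) = walkCount t m i := by
  refine card_equiv ((Equiv.piCongrRight fun _ => Equiv.boolNot).prodCongr
    (Equiv.piCongrRight fun _ => Equiv.boolNot)) fun p => ?_
  simp only [mem_filter, mem_univ, true_and, Equiv.prodCongr_apply, Prod.map,
    Equiv.piCongrRight_apply, Pi.map_apply, Equiv.boolNot_apply, sum_ite_not]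
  omega

theorem walkCount_succ_right (t m : ℕ) : walkCount t (m + 1) = neighbourSum (walkCount t m) := by
  ext i
  simp only [neighbourSum, walkCount, card_filter, Fintype.sum_prod_type]
  rw [← sum_add_distrib]
  refine sum_congr rfl fun f _ => ?_
  rw [← (Fin.consEquiv fun _ => Bool).sum_comp, Fintype.sum_prod_type, Fintype.sum_bool]
  simp only [Fin.consEquiv_apply, sum_ite_cons, if_true, Bool.false_eq_true, if_false]
  congr 1 <;> exact sum_congr rfl fun g _ => if_congr (by omega) rfl rfl

theorem walkCount_zero_zero_of_ne {i : ℤ} (hi : i ≠ 0) : walkCount 0 0 i = 0 := by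
  simp [walkCount, hi.symm]

theorem walkCount_zero_left_add_two_le (m : ℕ) {i : ℤ} (hi : 0 ≤ i) :
    walkCount 0 m (i + 2) ≤ walkCount 0 m i := by
  induction m generalizing i with
  | zero => simp [walkCount_zero_zero_of_ne (by omega : i + 2 ≠ 0)]
  | succ m ih =>
    rw [walkCount_succ_right]
    exact neighbourSum_add_two_le (walkCount_neg 0 m) (fun _ => ih) hi

theorem walkCount_zero_right_two_mul (t : ℕ) (k : ℤ) : walkCount t 0 (2 * k) = walkCount 0 t k :=
  card_equiv (Equiv.prodComm _ _) fun p => by simp [sum_ite_two_eq_two_mul]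

theorem walkCount_zero_right_of_odd (t : ℕ) {j : ℤ} (hj : Odd j) : walkCount t 0 j = 0 := by
  obtain ⟨k, rfl⟩ := hj
  simp only [walkCount, card_eq_zero, filter_eq_empty_iff, mem_univ, true_implies]
  intro p
  simp only [sum_ite_two_eq_two_mul, univ_eq_empty, sum_empty]
  omega

theorem walkCount_zero_right_add_four_le (t : ℕ) {j : ℤ} (hj : -1 ≤ j) :
    walkCount t 0 (j + 4) ≤ walkCount t 0 j := by
  obtain ⟨k, rfl | rfl⟩ := Int.even_or_odd' j
  · rw [show 2 * k + 4 = 2 * (k + 2) by ring, walkCount_zero_right_two_mul,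
      walkCount_zero_right_two_mul]
    exact walkCount_zero_left_add_two_le t (by omega)
  · simp [walkCount_zero_right_of_odd t (⟨k + 2, by ring⟩ : Odd (2 * k + 1 + 4))]

theorem walkCount_succ_right_add_two_le (t m : ℕ) {i : ℤ} (hi : 0 ≤ i) :
    walkCount t (m + 1) (i + 2) ≤ walkCount t (m + 1) i := by
  induction m generalizing i with
  | zero =>
    rw [walkCount_succ_right]
    exact neighbourSum_add_two_le_of_add_four_le (fun _ => walkCount_zero_right_add_four_le t) hi
  | succ m ih =>
    rw [walkCount_succ_right]
    exact neighbourSum_add_two_le (walkCount_neg t (m + 1)) (fun _ => ih) hi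

theorem walkCount_antitone_general (r t : ℕ) (hrt : 2 * t < r) :
    (∀ i : ℕ, walkCount t (r - 2 * t) (2 * (i + 1)) ≤ walkCount t (r - 2 * t) (2 * i)) ∧
    (4 ∣ r → walkCount t (r - 2 * t) 2 ≤ walkCount t (r - 2 * t) 0) := by
  obtain ⟨m, hm⟩ : ∃ m, r - 2 * t = m + 1 := ⟨r - 2 * t - 1, by omega⟩
  have hstep (i : ℕ) :
      walkCount t (r - 2 * t) (2 * (i + 1)) ≤ walkCount t (r - 2 * t) (2 * i) := by
    rw [hm, mul_add_one]
    exact walkCount_succ_right_add_two_le t m (by positivity)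
  exact ⟨hstep, fun _ => by simpa using hstep 0⟩

/-- If `r - 2t` is an even positive integer and `i ≥ 0`, then
`w^{2i}_{r,t} ≥ w^{2(i+1)}_{r,t}`; in particular if `4 ∣ r` then `w^{0}_{r,t} ≥ w^{2}_{r,t}`. -/
theorem walkCount_antitone (r t : ℕ) (hrt : 2 * t < r) (heven : Even (r - 2 * t)) :
    (∀ i : ℕ, walkCount t (r - 2 * t) (2 * (i + 1)) ≤ walkCount t (r - 2 * t) (2 * i)) ∧
    (4 ∣ r → walkCount t (r - 2 * t) 2 ≤ walkCount t (r - 2 * t) 0) :=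
  walkCount_antitone_general r t hrt
end

section
/- Let x^{i}_{r,0} = E[|i + Σ_{k=1}^{r} ε_k|] where ε_1,…,ε_r are independent uniform ±1 random variables. Then for all integers i, i' with 0 ≤ |i'| ≤ |i| − 2 and all r ≥ 0, x^{i}_{r,0} > x^{i'}_{r,0}. -/
open Finset

/-!
Reflecting a walk (negating every step) shows `E|i + S| = E max(|i|, |S|)`, because
`|x + y| + |x - y| = 2 max(|x|, |y|)`. The right side is monotone in `|i|`, and strictly
increases from `i'` to `i` as soon as some walk ends with `|S| < |i|`; a walk that always steps
towards `0` ends with `|S| ≤ 1 < 2 ≤ |i|`.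
-/

/-- `walkExp i t m` is the expected absolute value of the endpoint of a random walk
started at `i` with `t` independent uniform ±2 steps and `m` independent uniform ±1
steps; so `x^{i}_{r,t} = walkExp i t (r - 2t)`. -/
noncomputable def walkExp (i : ℤ) (t m : ℕ) : ℝ :=
  (∑ p : (Fin t → Bool) × (Fin m → Bool),
    |(i : ℝ) + (∑ k, (if p.1 k then (2 : ℝ) else -2)) +
      (∑ k, (if p.2 k then (1 : ℝ) else -1))|) / 2 ^ (t + m)

theorem abs_add_add_abs_sub (x y : ℝ) : |x + y| + |x - y| = 2 * max |x| |y| := by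
  rcases abs_cases (x + y) with ⟨h₁, _⟩ | ⟨h₁, _⟩ <;>
    rcases abs_cases (x - y) with ⟨h₂, _⟩ | ⟨h₂, _⟩ <;>
    rcases abs_cases x with ⟨hx, _⟩ | ⟨hx, _⟩ <;> rcases abs_cases y with ⟨hy, _⟩ | ⟨hy, _⟩ <;>
    rcases max_cases |x| |y| with ⟨hm, _⟩ | ⟨hm, _⟩ <;> linarith

theorem sum_abs_add_eq_sum_max {α : Type*} [Fintype α] (e : α ≃ α) (f : α → ℝ)
    (hf : ∀ a, f (e a) = -f a) (x : ℝ) :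
    ∑ a, |x + f a| = ∑ a, max |x| |f a| := by
  have hsym : ∑ a, |x + f a| = ∑ a, |x - f a| := by
    rw [← e.sum_comp]
    simp only [hf, ← sub_eq_add_neg]
  have := sum_congr rfl fun a (_ : a ∈ univ) => abs_add_add_abs_sub x (f a)
  rw [sum_add_distrib, ← hsym, ← mul_sum] at this
  linarith

def walkEnd {r : ℕ} (p : Fin r → Bool) : ℝ :=
  ∑ k, if p k then 1 else -1

theorem walkEnd_not {r : ℕ} (p : Fin r → Bool) : walkEnd (fun k => !p k) = -walkEnd p := by
  simp only [walkEnd, ← sum_neg_distrib]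
  refine sum_congr rfl fun k _ => ?_
  rcases Bool.eq_false_or_eq_true (p k) with h | h <;> simp [h]

theorem walkEnd_cons {r : ℕ} (b : Bool) (p : Fin r → Bool) :
    walkEnd (Fin.cons b p : Fin (r + 1) → Bool) = (if b then 1 else -1) + walkEnd p := by
  simp [walkEnd, Fin.sum_univ_succ]

theorem exists_abs_walkEnd_le_one (r : ℕ) : ∃ p : Fin r → Bool, |walkEnd p| ≤ 1 := by
  induction r with
  | zero => exact ⟨Fin.elim0, by simp [walkEnd]⟩
  | succ r ih =>
    obtain ⟨p, hp⟩ := ih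
    refine ⟨Fin.cons (decide (walkEnd p ≤ 0)) p, ?_⟩
    rw [walkEnd_cons, abs_le] at *
    by_cases h : walkEnd p ≤ 0 <;>
      simp only [h, decide_true, decide_false, if_true, if_false, Bool.false_eq_true] <;>
      constructor <;> linarith

theorem walkExp_zero_left (i : ℤ) (r : ℕ) :
    walkExp i 0 r = (∑ p : Fin r → Bool, |(i : ℝ) + walkEnd p|) / 2 ^ r := by
  simp [walkExp, walkEnd, Fintype.sum_prod_type]

theorem walkExp_zero_left_eq_sum_max (i : ℤ) (r : ℕ) :
    walkExp i 0 r = (∑ p : Fin r → Bool, max |(i : ℝ)| |walkEnd p|) / 2 ^ r := by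
  rw [walkExp_zero_left, sum_abs_add_eq_sum_max (Equiv.piCongrRight fun _ => Equiv.boolNot)]
  exact fun p => walkEnd_not p

/-- For all integers `i, i'` with `|i'| ≤ |i| − 2` and all `r ≥ 0`,
`x^{i}_{r,0} > x^{i'}_{r,0}`. -/
theorem walkExp_strict_mono_start (r : ℕ) (i i' : ℤ) (h : |i'| + 2 ≤ |i|) :
    walkExp i' 0 r < walkExp i 0 r := by
  have hi : |(i' : ℝ)| + 2 ≤ |(i : ℝ)| := by exact_mod_cast h
  simp only [walkExp_zero_left_eq_sum_max]
  gcongr ?_ / _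
  obtain ⟨p₀, hp₀⟩ := exists_abs_walkEnd_le_one r
  have hp₀i : |walkEnd p₀| < |(i : ℝ)| := by linarith [abs_nonneg (i' : ℝ)]
  refine sum_lt_sum (fun p _ => max_le_max_right _ (by linarith)) ⟨p₀, mem_univ _, ?_⟩
  exact (max_lt (by linarith) hp₀i).trans_le (le_max_left _ _)
end

section
/- Let x^{0}_{r,t} denote the expected absolute value of the endpoint of a random walk started at 0 with t independent uniform ±2 steps and r − 2t independent uniform ±1 steps (r ≥ 2t). Then for every r ≥ 2, x^{0}_{r,1} > x^{0}_{r,0}; that is, replacing two unit steps by one double step strictly increases the expected distance from the origin. -/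
/-!
Conditioning on the first step shows that `walkExp i t m` averages `walkExp (i ± 1) t (m - 1)`
(resp. `walkExp (i ± 2) (t - 1) m`). Hence `x^{0}_{m+2,0}` is the average of
`w(2), w(0), w(0), w(-2)` and `x^{0}_{m+2,1}` that of `w(2), w(-2)`, where `w i = walkExp i 0 m`,
so the claim is the strict midpoint convexity `2 w(0) < w(2) + w(-2)`. Weak convexity holds
termwise by the triangle inequality. Strict convexity at every `|i| ≤ 1` follows by induction
on `m`: with no steps left, `|i + 2| + |i - 2| = 4 > 2 |i|`, and otherwise one of the two
neighbours `i ± 1` again satisfies `|i ± 1| ≤ 1`.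
-/

open Finset

lemma sum_fun_succ_bool {M : Type*} [AddCommMonoid M] (n : ℕ) (g : (Fin (n + 1) → Bool) → M) :
    ∑ q, g q = ∑ q : Fin n → Bool, (g (Fin.cons true q) + g (Fin.cons false q)) := by
  rw [← (Fin.consEquiv fun _ => Bool).sum_comp, Fintype.sum_prod_type, Fintype.sum_bool,
    ← sum_add_distrib]
  rfl

lemma walkExp_succ_unit (i : ℤ) (t m : ℕ) :
    walkExp i t (m + 1) = (walkExp (i + 1) t m + walkExp (i - 1) t m) / 2 := by
  unfold walkExp
  rw [← add_div, div_div, ← pow_succ, ← sum_add_distrib, Fintype.sum_prod_type,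
    Fintype.sum_prod_type]
  congr 1
  refine sum_congr rfl fun s _ => ?_
  rw [sum_fun_succ_bool]
  refine sum_congr rfl fun q _ => ?_
  simp only [Fin.sum_univ_succ, Fin.cons_zero, Fin.cons_succ, if_true,
    Bool.false_eq_true, if_false, Int.cast_add, Int.cast_sub, Int.cast_one]
  ring_nf

lemma walkExp_succ_double (i : ℤ) (t m : ℕ) :
    walkExp i (t + 1) m = (walkExp (i + 2) t m + walkExp (i - 2) t m) / 2 := by
  unfold walkExp
  rw [← add_div, div_div, ← pow_succ, ← sum_add_distrib, Fintype.sum_prod_type,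
    Fintype.sum_prod_type, sum_fun_succ_bool]
  congr 1
  · refine sum_congr rfl fun s _ => ?_
    rw [← sum_add_distrib]
    refine sum_congr rfl fun q _ => ?_
    simp only [Fin.sum_univ_succ, Fin.cons_zero, Fin.cons_succ, if_true,
      Bool.false_eq_true, if_false, Int.cast_add, Int.cast_sub, Int.cast_ofNat]
    ring_nf
  · ring_nf

lemma walkExp_zero_zero (i : ℤ) : walkExp i 0 0 = |(i : ℝ)| := by
  simp [walkExp]

lemma two_mul_walkExp_le (i d : ℤ) (t m : ℕ) :
    2 * walkExp i t m ≤ walkExp (i + d) t m + walkExp (i - d) t m := by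
  unfold walkExp
  rw [← add_div, mul_div_assoc', ← sum_add_distrib, mul_sum]
  gcongr with p
  calc 2 * |(i : ℝ) + _ + _| = |((i + d : ℤ) : ℝ) + _ + _ + (((i - d : ℤ) : ℝ) + _ + _)| := by
        push_cast; rw [← abs_two, ← abs_mul, abs_two]; ring_nf
    _ ≤ _ := abs_add_le _ _

lemma two_mul_walkExp_lt (m : ℕ) {i : ℤ} (hi : |i| ≤ 1) :
    2 * walkExp i 0 m < walkExp (i + 2) 0 m + walkExp (i - 2) 0 m := by
  induction m generalizing i with
  | zero =>
    have hi' : |(i : ℝ)| ≤ 1 := by exact_mod_cast hi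
    obtain ⟨hl, hu⟩ := abs_le.1 hi'
    simp only [walkExp_zero_zero, Int.cast_add, Int.cast_sub, Int.cast_ofNat]
    rw [abs_of_pos (show (0 : ℝ) < i + 2 by linarith),
      abs_of_neg (show (i : ℝ) - 2 < 0 by linarith)]
    linarith
  | succ m ih =>
    simp only [walkExp_succ_unit]
    obtain ⟨hl, hu⟩ := abs_le.1 hi
    rcases le_total 0 i with hi0 | hi0
    · have hstrict := ih (i := i - 1) (abs_le.2 ⟨by omega, by omega⟩)
      have hweak := two_mul_walkExp_le (i + 1) 2 0 m
      ring_nf at hstrict hweak ⊢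
      linarith
    · have hstrict := ih (i := i + 1) (abs_le.2 ⟨by omega, by omega⟩)
      have hweak := two_mul_walkExp_le (i - 1) 2 0 m
      ring_nf at hstrict hweak ⊢
      linarith

/-- For every `r ≥ 2`, `x^{0}_{r,0} < x^{0}_{r,1}`: replacing two unit steps by one
double step strictly increases the expected distance from the origin. -/
theorem walkExp_double_step_increases (r : ℕ) (hr : 2 ≤ r) :
    walkExp 0 0 r < walkExp 0 1 (r - 2) := by
  obtain ⟨m, rfl⟩ := Nat.exists_eq_add_of_le' hr
  have hconvex := two_mul_walkExp_lt m (i := 0) (by simp)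
  rw [Nat.add_sub_cancel, walkExp_succ_unit, walkExp_succ_unit, walkExp_succ_unit,
    walkExp_succ_double]
  ring_nf at hconvex ⊢
  linarith
end

section
/- Let 0 ≤ p ≤ ε ≤ 1/16 and let r ≥ 8 be an integer. Let X be a Binomial(r, p) random variable. Then the probability that X ≥ ⌈r/2⌉ is at most 2p². (This bounds the probability that a majority of r independent samples hit an event of small probability p.) -/
/-!
Bounding `(1 - p) ^ (r - x) ≤ 1` and `p ^ x ≤ p ^ ⌈r/2⌉` termwise, the tail is at most
`2 ^ r * p ^ ⌈r/2⌉ = p ^ 2 * (2 ^ r * p ^ (⌈r/2⌉ - 2))`, and the last factor is at most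
`(16 * p) ^ (⌈r/2⌉ - 2) ≤ 1` because `r ≤ 4 * (⌈r/2⌉ - 2)` once `r ≥ 8`.
-/

open Finset

theorem sum_Icc_choose_mul_pow_mul_pow_le_two_pow_mul_pow {p : ℝ} (hp₀ : 0 ≤ p) (hp₁ : p ≤ 1)
    (n k : ℕ) :
    ∑ x ∈ Icc k n, (n.choose x : ℝ) * p ^ x * (1 - p) ^ (n - x) ≤ 2 ^ n * p ^ k := by
  have hchoose : ∑ x ∈ Icc k n, n.choose x ≤ 2 ^ n :=
    (sum_le_sum_of_subset fun x hx => by simp only [mem_Icc, mem_range] at *; omega).trans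
      (Nat.sum_range_choose n).le
  calc ∑ x ∈ Icc k n, (n.choose x : ℝ) * p ^ x * (1 - p) ^ (n - x)
      ≤ ∑ x ∈ Icc k n, (n.choose x : ℝ) * p ^ k := by
        refine sum_le_sum fun x hx => ?_
        calc (n.choose x : ℝ) * p ^ x * (1 - p) ^ (n - x) ≤ n.choose x * p ^ k * 1 := by
              gcongr (n.choose x : ℝ) * ?_ * ?_
              · exact pow_le_pow_of_le_one hp₀ hp₁ (mem_Icc.mp hx).1
              · exact pow_le_one₀ (by linarith) (by linarith)
          _ = n.choose x * p ^ k := mul_one _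
    _ = (∑ x ∈ Icc k n, (n.choose x : ℝ)) * p ^ k := (sum_mul ..).symm
    _ ≤ 2 ^ n * p ^ k := by gcongr; exact_mod_cast hchoose

theorem two_pow_mul_pow_le_one {p : ℝ} (hp₀ : 0 ≤ p) (hp : 16 * p ≤ 1) {n m : ℕ}
    (hnm : n ≤ 4 * m) : 2 ^ n * p ^ m ≤ 1 :=
  calc (2 : ℝ) ^ n * p ^ m ≤ 2 ^ (4 * m) * p ^ m := by gcongr; norm_num
    _ = (16 * p) ^ m := by rw [pow_mul, mul_pow]; norm_num
    _ ≤ 1 := pow_le_one₀ (by positivity) hp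

/-- Let `0 ≤ p ≤ ε ≤ 1/16` and `r ≥ 8`, and let `X ~ Binomial(r, p)`. Then
`P[X ≥ ⌈r/2⌉] ≤ 2p²`: the probability that a majority of `r` independent samples hit an
event of probability `p` is at most `2p²`. (Here `⌈r/2⌉ = (r+1)/2` in `ℕ`.) -/
theorem binomial_majority_bound (r : ℕ) (hr : 8 ≤ r) (p ε : ℝ)
    (hp : 0 ≤ p) (hpε : p ≤ ε) (hε : ε ≤ 1 / 16) :
    ∑ x ∈ Finset.Icc ((r + 1) / 2) r, (r.choose x : ℝ) * p ^ x * (1 - p) ^ (r - x) ≤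
      2 * p ^ 2 := by
  have hp16 : 16 * p ≤ 1 := by linarith
  obtain ⟨m, hm⟩ : ∃ m, (r + 1) / 2 = m + 2 := ⟨(r + 1) / 2 - 2, by omega⟩
  calc ∑ x ∈ Icc ((r + 1) / 2) r, (r.choose x : ℝ) * p ^ x * (1 - p) ^ (r - x)
      ≤ 2 ^ r * p ^ (m + 2) :=
        hm ▸ sum_Icc_choose_mul_pow_mul_pow_le_two_pow_mul_pow hp (by linarith) r _
    _ = p ^ 2 * (2 ^ r * p ^ m) := by ring
    _ ≤ p ^ 2 * 1 := by gcongr; exact two_pow_mul_pow_le_one hp hp16 (by omega)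
    _ ≤ 2 * p ^ 2 := by linarith [sq_nonneg p]
end

section
/- Fix ε with 0 < ε ≤ 1/16, an alphabet of size σ, and r = max(⌈2 ln(σ/ε²)/ε⁴⌉, 8). Let S be a multiset of n strings of length ℓ over the alphabet, and let S' be a multiset of r strings drawn independently and uniformly at random from S (with replacement). Then E[d(S, c(S'))] ≤ (1 + 2ε) · d(S, c(S)), where c(·) denotes a consensus (column-wise majority) string and d(S, x) = Σ_{s∈S} d_H(s, x). -/
/-!
Everything splits over positions: `d(S, x)` is the sum over columns of the number of strings
disagreeing with `x` there, and the sample consensus is, column by column, a mode of the sampled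
column. So fix a column in which the character `a` occurs `N a` times out of `n`, any character
`c` with cost `d = n - N c`, and call a sampled mode `a` bad when its excess `N c - N a` exceeds
`ε d`. Modes that are not bad cost at most `(1 + ε) d`; a bad one costs at most `n`, and bad
modes are rare by Chernoff bounds, obtained by weighting each draw and comparing with the
`r`-th power of the total weight:
* if `d < ε n`, a sample whose mode differs from `c` has at most half of its draws equal to
  `c`, which happens for at most `(2 √(N c · d)) ^ r ≤ ε d n ^ (r - 1)` samples;
* if `d ≥ ε n`, a bad `a` trails `c` by more than `ε² n`, so the mode is `a` for at most
  `n ^ r exp (-r ε⁴ / 2) ≤ n ^ r ε² / σ` samples, and the `σ` characters together cost at most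
  `ε² n ≤ ε d`.
-/

open Finset

variable {α : Type*} [Fintype α] [DecidableEq α]

/-- Total Hamming distance from an indexed family of strings to a string. -/
def famDist {ι : Type*} [Fintype ι] {ℓ : ℕ} (S : ι → Fin ℓ → α) (x : Fin ℓ → α) : ℕ :=
  ∑ j, hammingDist (S j) x

/-- `c` is a consensus string of the family `S`: at each position, `c i` is a most
frequent character of the corresponding column. -/
def IsConsensus {ι : Type*} [Fintype ι] {ℓ : ℕ} (S : ι → Fin ℓ → α)
    (c : Fin ℓ → α) : Prop :=
  ∀ i : Fin ℓ, ∀ a : α,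
    (Finset.univ.filter fun j => S j i = a).card ≤
      (Finset.univ.filter fun j => S j i = c i).card

open Real

section Sampling

variable {ι : Type*} {r : ℕ}

theorem prod_ite_mul_ite_eq_pow_mul_pow (P Q : ι → Prop) [DecidablePred P] [DecidablePred Q]
    (t s : ℝ) (f : Fin r → ι) :
    ∏ k, (if P (f k) then t else 1) * (if Q (f k) then s else 1) =
      t ^ #{k | P (f k)} * s ^ #{k | Q (f k)} := by
  rw [prod_mul_distrib, prod_ite, prod_ite]
  simp

variable [Fintype ι]

theorem card_le_sum_pow_of_one_le_prod (w : ι → ℝ) (hw : ∀ j, 0 ≤ w j)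
    (E : Finset (Fin r → ι)) (hE : ∀ f ∈ E, 1 ≤ ∏ k, w (f k)) :
    (#E : ℝ) ≤ (∑ j, w j) ^ r := by
  calc (#E : ℝ) = ∑ _f ∈ E, (1 : ℝ) := by simp
    _ ≤ ∑ f ∈ E, ∏ k, w (f k) := sum_le_sum hE
    _ ≤ ∑ f : Fin r → ι, ∏ k, w (f k) :=
        sum_le_sum_of_subset_of_nonneg (subset_univ E) fun f _ _ => prod_nonneg fun k _ => hw _
    _ = (∑ j, w j) ^ r := by
        rw [← Fin.prod_const r, prod_univ_sum]
        simp

theorem sum_ite_mul_ite_eq (P Q : ι → Prop) [DecidablePred P] [DecidablePred Q]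
    (hPQ : ∀ j, P j → ¬ Q j) (t s : ℝ) :
    ∑ j, (if P j then t else 1) * (if Q j then s else 1) =
      Fintype.card ι + (t - 1) * #{j | P j} + (s - 1) * #{j | Q j} := by
  have hpt : ∀ j, (if P j then t else 1) * (if Q j then s else 1) =
      1 + (t - 1) * (if P j then 1 else 0) + (s - 1) * (if Q j then 1 else 0) := by
    intro j
    by_cases hP : P j
    · simp [hP, hPQ j hP]
    · by_cases hQ : Q j <;> simp [hP, hQ]
  simp only [hpt, sum_add_distrib, ← mul_sum, sum_boole]
  simp

/-- Exponential moments: weight a point of `P` by `t = √(#Q / #P) ≤ 1` and a point of `Q` by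
`t⁻¹`. On the event the weights of the `r` draws multiply to at least `1`, and they sum to
`n - (√#P - √#Q) ^ 2`. If `#Q = 0` then `t = 0`, and its junk inverse only meets exponent `0`. -/
theorem card_sample_le_hellinger (P Q : ι → Prop) [DecidablePred P] [DecidablePred Q]
    (hPQ : ∀ j, P j → ¬ Q j) (hQP : #{j | Q j} ≤ #{j | P j}) :
    (#{f : Fin r → ι | #{k | P (f k)} ≤ #{k | Q (f k)}} : ℝ) ≤
      (Fintype.card ι - (√(#{j | P j} : ℝ) - √(#{j | Q j} : ℝ)) ^ 2) ^ r := by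
  set a := √(#{j | P j} : ℝ)
  set b := √(#{j | Q j} : ℝ)
  have hb0 : 0 ≤ b := sqrt_nonneg _
  have hba : b ≤ a := sqrt_le_sqrt (by exact_mod_cast hQP)
  set t := b / a
  have ht0 : 0 ≤ t := div_nonneg hb0 (hb0.trans hba)
  have ht1 : t ≤ 1 := div_le_one_of_le₀ hba (hb0.trans hba)
  have hsum : ∑ j, (if P j then t else 1) * (if Q j then t⁻¹ else 1) =
      Fintype.card ι - (a - b) ^ 2 := by
    have ha2 : a ^ 2 = #{j | P j} := sq_sqrt (Nat.cast_nonneg _)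
    have hb2 : b ^ 2 = #{j | Q j} := sq_sqrt (Nat.cast_nonneg _)
    rw [sum_ite_mul_ite_eq P Q hPQ, ← ha2, ← hb2]
    rcases hb0.eq_or_lt with hb | hb
    · simp only [t, ← hb]
      simp
      ring
    · have ha : 0 < a := hb.trans_le hba
      simp only [t]
      field_simp
      ring
  rw [← hsum]
  refine card_le_sum_pow_of_one_le_prod _ (fun j => by positivity) _ fun f hf => ?_
  rw [mem_filter] at hf
  rw [prod_ite_mul_ite_eq_pow_mul_pow, inv_pow]
  rcases Nat.eq_zero_or_pos #{k | Q (f k)} with h0 | hpos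
  · simp [h0, Nat.le_zero.mp (h0 ▸ hf.2)]
  · have ht : 0 < t := by
      obtain ⟨k, hk⟩ := card_pos.mp hpos
      have hQ : 0 < #{j | Q j} := card_pos.mpr ⟨f k, by simpa using hk⟩
      have hb : 0 < b := sqrt_pos.mpr (by exact_mod_cast hQ)
      exact div_pos hb (hb.trans_le hba)
    calc (1 : ℝ) = t ^ #{k | Q (f k)} * (t ^ #{k | Q (f k)})⁻¹ := by
          rw [mul_inv_cancel₀ (by positivity)]
      _ ≤ t ^ #{k | P (f k)} * (t ^ #{k | Q (f k)})⁻¹ :=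
          mul_le_mul_of_nonneg_right (pow_le_pow_of_le_one ht0 ht1 hf.2) (by positivity)

theorem card_sample_le_sub_sq_div (P Q : ι → Prop) [DecidablePred P] [DecidablePred Q]
    (hPQ : ∀ j, P j → ¬ Q j) (hQP : #{j | Q j} ≤ #{j | P j}) :
    (#{f : Fin r → ι | #{k | P (f k)} ≤ #{k | Q (f k)}} : ℝ) ≤
      (Fintype.card ι - ((#{j | P j} : ℝ) - #{j | Q j}) ^ 2 / (2 * Fintype.card ι)) ^ r := by
  have hPQn : (#{j | P j} : ℝ) + #{j | Q j} ≤ Fintype.card ι := by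
    classical
    rw [← Nat.cast_add, ← card_union_of_disjoint (disjoint_filter.2 fun j _ => hPQ j)]
    exact_mod_cast card_le_univ _
  set a := √(#{j | P j} : ℝ)
  set b := √(#{j | Q j} : ℝ)
  have hb0 : 0 ≤ b := sqrt_nonneg _
  have hba : b ≤ a := sqrt_le_sqrt (by exact_mod_cast hQP)
  have ha2 : a ^ 2 = #{j | P j} := sq_sqrt (Nat.cast_nonneg _)
  have hb2 : b ^ 2 = #{j | Q j} := sq_sqrt (Nat.cast_nonneg _)
  refine (card_sample_le_hellinger P Q hPQ hQP).trans (pow_le_pow_left₀ (by nlinarith) ?_ r)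
  have hdiff : ((#{j | P j} : ℝ) - #{j | Q j}) ^ 2 = (a - b) ^ 2 * (a + b) ^ 2 := by
    rw [← ha2, ← hb2]; ring
  show (Fintype.card ι : ℝ) - (a - b) ^ 2 ≤ _
  rw [sub_le_sub_iff_left, hdiff]
  refine div_le_of_le_mul₀ (by positivity) (sq_nonneg _) ?_
  gcongr
  nlinarith

end Sampling

theorem mul_pow_le_of_sq_le {n d y ε : ℝ} {r : ℕ} (hn : 0 ≤ n) (hd : 0 ≤ d) (hy : 0 ≤ y)
    (hyn : y ≤ n / 2) (hy2 : y ^ 2 ≤ 4 * n * d) (hr : 2 ≤ r) (hε : 16 ≤ ε * 2 ^ r) :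
    n * y ^ r ≤ ε * d * n ^ r := by
  obtain ⟨m, rfl⟩ : ∃ m, r = m + 2 := ⟨r - 2, by omega⟩
  calc n * y ^ (m + 2) = n * y ^ m * y ^ 2 := by ring
    _ ≤ n * (n / 2) ^ m * (4 * n * d) := by gcongr
    _ = 16 / 2 ^ (m + 2) * d * n ^ (m + 2) := by rw [div_pow]; field_simp; ring
    _ ≤ ε * d * n ^ (m + 2) := by
        gcongr
        rwa [div_le_iff₀ (by positivity)]

theorem one_le_log_div_sq {σ ε : ℝ} (hσ : 1 ≤ σ) (hε : 0 < ε) (hε16 : ε ≤ 1 / 16) :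
    1 ≤ log (σ / ε ^ 2) := by
  rw [le_log_iff_exp_le (by positivity), le_div_iff₀ (by positivity)]
  nlinarith [exp_one_lt_d9]

theorem sixteen_le_mul_two_pow {ε : ℝ} {r : ℕ} (hε : 0 < ε) (hε16 : ε ≤ 1 / 16)
    (hr : 2 ≤ r * ε ^ 4) : 16 ≤ ε * 2 ^ r := by
  have h2r : (r : ℝ) ≤ 2 ^ r := by exact_mod_cast Nat.lt_two_pow_self.le
  have hε3 : ε ^ 3 ≤ 1 / 8 := by
    calc ε ^ 3 ≤ (1 / 16) ^ 3 := by gcongr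
      _ ≤ 1 / 8 := by norm_num
  nlinarith [mul_nonneg (mul_nonneg hε.le (Nat.cast_nonneg r)) (sub_nonneg.mpr hε3)]

theorem card_mul_exp_le_sq {σ ε : ℝ} {r : ℕ} (hσ : 0 < σ) (hε : 0 < ε)
    (hr : 2 * log (σ / ε ^ 2) ≤ r * ε ^ 4) : σ * exp (-r * (ε ^ 2) ^ 2 / 2) ≤ ε ^ 2 := by
  have hlog : log (ε ^ 2 / σ) = -log (σ / ε ^ 2) := by rw [← log_inv, inv_div]
  have : exp (-r * (ε ^ 2) ^ 2 / 2) ≤ ε ^ 2 / σ := by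
    calc exp (-r * (ε ^ 2) ^ 2 / 2) ≤ exp (log (ε ^ 2 / σ)) := by
          rw [exp_le_exp, hlog]
          linarith [show (ε ^ 2) ^ 2 = ε ^ 4 by ring]
      _ = ε ^ 2 / σ := exp_log (by positivity)
  calc σ * exp (-r * (ε ^ 2) ^ 2 / 2) ≤ σ * (ε ^ 2 / σ) := by gcongr
    _ = ε ^ 2 := by field_simp

section Column

variable {ι β : Type*} [Fintype ι] [DecidableEq β]

def charCount (x : ι → β) (a : β) : ℕ := #{j | x j = a}

def IsMode (x : ι → β) (a : β) : Prop :=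
  ∀ b, charCount x b ≤ charCount x a

variable {r : ℕ} {x : ι → β} {c : β} {choice : (Fin r → ι) → β}

theorem charCount_le_card (x : ι → β) (a : β) : charCount x a ≤ Fintype.card ι :=
  card_le_univ _

theorem card_filter_ne_eq_card_sub_charCount (x : ι → β) (a : β) :
    (#{j | x j ≠ a} : ℝ) = Fintype.card ι - charCount x a := by
  rw [eq_sub_iff_add_eq, charCount, ← Nat.cast_add, add_comm,
    card_filter_add_card_filter_not (s := univ) fun j => x j = a, card_univ]

theorem card_choice_ne_le (hchoice : ∀ f, IsMode (x ∘ f) (choice f))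
    (hc : (Fintype.card ι : ℝ) ≤ 2 * charCount x c) :
    (#{f | choice f ≠ c} : ℝ) ≤
      (2 * √(charCount x c : ℝ) * √(Fintype.card ι - charCount x c : ℝ)) ^ r := by
  have hsub : #{f | choice f ≠ c} ≤
      #{f : Fin r → ι | #{k | x (f k) = c} ≤ #{k | x (f k) ≠ c}} :=
    card_le_card fun f hf => by
      rw [mem_filter] at hf ⊢
      refine ⟨mem_univ f, (hchoice f c).trans (card_le_card fun k hk => ?_)⟩
      simp only [mem_filter, Function.comp] at hk ⊢
      exact ⟨mem_univ k, hk.2 ▸ hf.2⟩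
  have hQP : #{j | x j ≠ c} ≤ #{j | x j = c} := by
    have := card_filter_ne_eq_card_sub_charCount x c
    exact_mod_cast (show (#{j | x j ≠ c} : ℝ) ≤ charCount x c by linarith)
  refine (Nat.cast_le.mpr hsub).trans ((card_sample_le_hellinger (fun j => x j = c)
    (fun j => x j ≠ c) (fun j h h' => h' h) hQP).trans (le_of_eq ?_))
  have hNc : (charCount x c : ℝ) ≤ Fintype.card ι := by exact_mod_cast charCount_le_card x c
  rw [card_filter_ne_eq_card_sub_charCount, show #{j | x j = c} = charCount x c from rfl, sub_sq,
    sq_sqrt (Nat.cast_nonneg _), sq_sqrt (sub_nonneg.mpr hNc)]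
  ring

theorem card_choice_eq_le_exp (hchoice : ∀ f, IsMode (x ∘ f) (choice f)) {a : β} {δ : ℝ}
    (hδ : 0 ≤ δ) (hgap : δ * Fintype.card ι < (charCount x c : ℝ) - charCount x a) :
    (#{f | choice f = a} : ℝ) ≤ Fintype.card ι ^ r * exp (-r * δ ^ 2 / 2) := by
  have hNc : (charCount x c : ℝ) ≤ Fintype.card ι := by exact_mod_cast charCount_le_card x c
  set n : ℝ := (Fintype.card ι : ℝ)
  set g : ℝ := (charCount x c : ℝ) - charCount x a
  have hg0 : 0 < g := lt_of_le_of_lt (by positivity) hgap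
  have hgn : g ≤ n := by
    linarith [(Nat.cast_nonneg (charCount x a) : (0 : ℝ) ≤ _)]
  have hn : 0 < n := hg0.trans_le hgn
  have hac : a ≠ c := by rintro rfl; simp [g] at hg0
  have hsub : #{f | choice f = a} ≤
      #{f : Fin r → ι | #{k | x (f k) = c} ≤ #{k | x (f k) = a}} :=
    card_le_card fun f hf => by
      rw [mem_filter] at hf ⊢
      exact ⟨mem_univ f, hf.2 ▸ hchoice f c⟩
  have hQP : #{j | x j = a} ≤ #{j | x j = c} := by
    have : (charCount x a : ℝ) ≤ charCount x c := by linarith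
    exact_mod_cast this
  have hbase : n - g ^ 2 / (2 * n) ≤ n * exp (-δ ^ 2 / 2) := by
    have hδg : n * δ ^ 2 / 2 ≤ g ^ 2 / (2 * n) := by
      rw [le_div_iff₀ (by positivity)]
      nlinarith [pow_le_pow_left₀ (by positivity) hgap.le 2]
    have := mul_le_mul_of_nonneg_left (add_one_le_exp (-δ ^ 2 / 2)) hn.le
    linarith
  have hbase0 : 0 ≤ n - g ^ 2 / (2 * n) := by
    rw [sub_nonneg, div_le_iff₀ (by positivity)]
    nlinarith
  calc (#{f | choice f = a} : ℝ) ≤ (n - g ^ 2 / (2 * n)) ^ r :=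
        (Nat.cast_le.mpr hsub).trans (card_sample_le_sub_sq_div (fun j => x j = c)
          (fun j => x j = a) (fun j hc ha => hac (ha.symm.trans hc)) hQP)
    _ ≤ (n * exp (-δ ^ 2 / 2)) ^ r := pow_le_pow_left₀ hbase0 hbase r
    _ = n ^ r * exp (-r * δ ^ 2 / 2) := by rw [mul_pow, ← exp_nat_mul]; ring_nf

theorem mul_card_choice_ne_le (hchoice : ∀ f, IsMode (x ∘ f) (choice f)) {ε : ℝ}
    (hr2 : 2 ≤ r) (h16 : 16 ≤ ε * 2 ^ r)
    (hd : 16 * ((Fintype.card ι : ℝ) - charCount x c) ≤ Fintype.card ι) :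
    (Fintype.card ι : ℝ) * #{f | choice f ≠ c} ≤
      ε * (Fintype.card ι - charCount x c) * Fintype.card ι ^ r := by
  have hNc : (charCount x c : ℝ) ≤ Fintype.card ι := by exact_mod_cast charCount_le_card x c
  have hmaj : (Fintype.card ι : ℝ) ≤ 2 * charCount x c := by linarith
  set n : ℝ := (Fintype.card ι : ℝ)
  set y := 2 * √(charCount x c : ℝ) * √(n - charCount x c)
  have hy2 : y ^ 2 = 4 * charCount x c * (n - charCount x c) := by
    rw [mul_pow, mul_pow, sq_sqrt (Nat.cast_nonneg _), sq_sqrt (sub_nonneg.mpr hNc)]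
    ring
  have hy0 : 0 ≤ y := by positivity
  have hyn : y ≤ n / 2 := by nlinarith
  calc n * #{f | choice f ≠ c} ≤ n * y ^ r := by
        gcongr
        exact card_choice_ne_le hchoice hmaj
    _ ≤ ε * (n - charCount x c) * n ^ r :=
        mul_pow_le_of_sq_le (by positivity) (sub_nonneg.mpr hNc) hy0 hyn
          (by rw [hy2]; gcongr) hr2 h16

theorem mul_card_choice_bad_le [Fintype β] (hchoice : ∀ f, IsMode (x ∘ f) (choice f))
    {ε : ℝ} (hε : 0 < ε) (hε16 : ε ≤ 1 / 16) (hr2 : 2 ≤ r) (h16 : 16 ≤ ε * 2 ^ r)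
    (hexp : Fintype.card β * exp (-r * (ε ^ 2) ^ 2 / 2) ≤ ε ^ 2) :
    (Fintype.card ι : ℝ) * #{f | ε * (Fintype.card ι - charCount x c) <
        (charCount x c : ℝ) - charCount x (choice f)} ≤
      ε * (Fintype.card ι - charCount x c) * Fintype.card ι ^ r := by
  have hNc : (charCount x c : ℝ) ≤ Fintype.card ι := by exact_mod_cast charCount_le_card x c
  set n : ℝ := (Fintype.card ι : ℝ)
  set d : ℝ := n - charCount x c
  rcases lt_or_ge d (ε * n) with hsmall | hlarge
  · refine le_trans ?_ (mul_card_choice_ne_le hchoice hr2 h16 (by nlinarith))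
    gcongr with f
    intro hbad hfc
    rw [hfc, sub_self] at hbad
    nlinarith
  · classical
    set B : Finset β := {a | ε * d < (charCount x c : ℝ) - charCount x a}
    have hsub : #{f | ε * d < (charCount x c : ℝ) - charCount x (choice f)} ≤
        #(B.biUnion fun a => {f | choice f = a}) :=
      card_le_card fun f hf => mem_biUnion.mpr ⟨choice f, by simpa [B] using hf, by simp⟩
    have hB : ∀ a ∈ B, (#{f | choice f = a} : ℝ) ≤ n ^ r * exp (-r * (ε ^ 2) ^ 2 / 2) :=
      fun a ha => card_choice_eq_le_exp hchoice (by positivity)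
        (lt_of_le_of_lt (by nlinarith) (mem_filter.mp ha).2)
    calc n * #{f | ε * d < (charCount x c : ℝ) - charCount x (choice f)}
        ≤ n * ∑ a ∈ B, (#{f | choice f = a} : ℝ) := by
          gcongr
          exact_mod_cast hsub.trans card_biUnion_le
      _ ≤ n * (Fintype.card β * (n ^ r * exp (-r * (ε ^ 2) ^ 2 / 2))) := by
          gcongr
          refine (sum_le_sum hB).trans ?_
          rw [sum_const, nsmul_eq_mul]
          gcongr
          exact_mod_cast card_le_univ B
      _ = n * (n ^ r * (Fintype.card β * exp (-r * (ε ^ 2) ^ 2 / 2))) := by ring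
      _ ≤ n * (n ^ r * ε ^ 2) := by gcongr
      _ = ε * (ε * n) * n ^ r := by ring
      _ ≤ ε * d * n ^ r := by gcongr

theorem sum_card_sub_charCount_choice_le [Fintype β] (hchoice : ∀ f, IsMode (x ∘ f) (choice f))
    {ε : ℝ} (hε : 0 < ε) (hε16 : ε ≤ 1 / 16)
    (hr : 2 * log (Fintype.card β / ε ^ 2) ≤ r * ε ^ 4) (c : β) :
    ∑ f, ((Fintype.card ι : ℝ) - charCount x (choice f)) ≤
      (1 + 2 * ε) * (Fintype.card ι - charCount x c) * Fintype.card ι ^ r := by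
  rcases isEmpty_or_nonempty ι with hι | ⟨⟨j⟩⟩
  · simp [charCount]
  have hσ : (1 : ℝ) ≤ Fintype.card β := by exact_mod_cast Fintype.card_pos_iff.mpr ⟨x j⟩
  have hrε : 2 ≤ r * ε ^ 4 := by linarith [one_le_log_div_sq hσ hε hε16]
  have hr2 : 2 ≤ r := by
    have : ε ^ 4 ≤ 1 := pow_le_one₀ hε.le (by linarith)
    have : (2 : ℝ) ≤ r := by nlinarith
    exact_mod_cast this
  have hbad := mul_card_choice_bad_le (c := c) hchoice hε hε16 hr2
    (sixteen_le_mul_two_pow hε hε16 hrε) (card_mul_exp_le_sq (by positivity) hε hr)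
  have hNc : (charCount x c : ℝ) ≤ Fintype.card ι := by exact_mod_cast charCount_le_card x c
  set n : ℝ := (Fintype.card ι : ℝ)
  set d : ℝ := n - charCount x c
  have hpt : ∀ f, n - charCount x (choice f) ≤ (1 + ε) * d +
      n * if ε * d < (charCount x c : ℝ) - charCount x (choice f) then 1 else 0 := by
    intro f
    have : (charCount x (choice f) : ℝ) ≤ n := Nat.cast_le.mpr (charCount_le_card x (choice f))
    split_ifs with h
    · nlinarith
    · linarith
  calc ∑ f, (n - charCount x (choice f))
      ≤ ∑ f, ((1 + ε) * d +
          n * if ε * d < (charCount x c : ℝ) - charCount x (choice f) then 1 else 0) :=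
        sum_le_sum fun f _ => hpt f
    _ = (1 + ε) * d * n ^ r +
          n * #{f | ε * d < (charCount x c : ℝ) - charCount x (choice f)} := by
        rw [sum_add_distrib, sum_const, ← mul_sum, sum_boole]
        simp [n, mul_comm]
    _ ≤ (1 + ε) * d * n ^ r + ε * d * n ^ r := by gcongr
    _ = (1 + 2 * ε) * d * n ^ r := by ring

end Column

omit [Fintype α] in
theorem famDist_eq_sum_card_sub_charCount {ι : Type*} [Fintype ι] {ℓ : ℕ}
    (S : ι → Fin ℓ → α) (y : Fin ℓ → α) :
    (famDist S y : ℝ) = ∑ i, ((Fintype.card ι : ℝ) - charCount (fun j => S j i) (y i)) := by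
  simp only [famDist, hammingDist, Nat.cast_sum, natCast_card_filter]
  rw [sum_comm]
  refine sum_congr rfl fun i _ => ?_
  rw [← natCast_card_filter]
  exact card_filter_ne_eq_card_sub_charCount _ _

/-- The expectation over the `r` independent uniform draws is the average over all `n ^ r`
samples `f : Fin r → Fin n`. -/
theorem sampling_consensus_expectation_general (σ n ℓ r : ℕ) (ε : ℝ)
    (hε : 0 < ε) (hε16 : ε ≤ 1 / 16) (hσ : Fintype.card α = σ)
    (hr : r = max ⌈2 * Real.log ((σ : ℝ) / ε ^ 2) / ε ^ 4⌉₊ 8)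
    (S : Fin n → Fin ℓ → α) (c : Fin ℓ → α)
    (cons : (Fin r → Fin n) → Fin ℓ → α)
    (hcons : ∀ f : Fin r → Fin n, IsConsensus (S ∘ f) (cons f)) :
    (∑ f : Fin r → Fin n, (famDist S (cons f) : ℝ)) / (n : ℝ) ^ r ≤
      (1 + 2 * ε) * (famDist S c : ℝ) := by
  have hrε : 2 * log (Fintype.card α / ε ^ 2) ≤ r * ε ^ 4 := by
    rw [hσ, ← div_le_iff₀ (by positivity)]
    exact (Nat.le_ceil _).trans (by exact_mod_cast hr ▸ le_max_left _ _)
  refine div_le_of_le_mul₀ (by positivity) (by positivity) ?_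
  simp only [famDist_eq_sum_card_sub_charCount, Fintype.card_fin]
  rw [sum_comm, mul_sum, sum_mul]
  gcongr with i
  simpa using sum_card_sub_charCount_choice_le (x := fun j => S j i) (fun f => hcons f i)
    hε hε16 hrε (c i)

/-- Sampling lemma: with `0 < ε ≤ 1/16`, alphabet size `σ`, and
`r = max(⌈2 ln(σ/ε²)/ε⁴⌉, 8)`, if `S'` consists of `r` strings drawn independently and
uniformly at random (with replacement) from the `n` strings of `S`, then
`E[d(S, c(S'))] ≤ (1 + 2ε) · d(S, c(S))`.  The expectation is written as an average over
all `n^r` possible samples `f : Fin r → Fin n`. -/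
theorem sampling_consensus_expectation (σ n ℓ r : ℕ) (hn : 0 < n) (ε : ℝ)
    (hε : 0 < ε) (hε16 : ε ≤ 1 / 16) (hσ : Fintype.card α = σ)
    (hr : r = max ⌈2 * Real.log ((σ : ℝ) / ε ^ 2) / ε ^ 4⌉₊ 8)
    (S : Fin n → Fin ℓ → α) (c : Fin ℓ → α) (hc : IsConsensus S c)
    (cons : (Fin r → Fin n) → Fin ℓ → α)
    (hcons : ∀ f : Fin r → Fin n, IsConsensus (S ∘ f) (cons f)) :
    (∑ f : Fin r → Fin n, (famDist S (cons f) : ℝ)) / (n : ℝ) ^ r ≤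
      (1 + 2 * ε) * (famDist S c : ℝ) :=
  sampling_consensus_expectation_general σ n ℓ r ε hε hε16 hσ hr S c cons hcons
end

section
/- Let 0 < ε ≤ 1/2, let d ≥ 0, and let S_x be a set of n* strings with a string x satisfying d(S_x, x) ≤ (1+ε) d. Let S'' be obtained from S_x by removing the ⌈ε n*⌉ strings farthest from x. Then d(S'', c(S'')) ≤ d(S'', x) ≤ (1−ε)(1+ε) d ≤ d; in particular S'' is feasible for the distance bound d. Moreover |S''| ≥ n*(1 − ε) − 1. -/
open Finset

variable {ℓ : ℕ} {α : Type*} [Fintype α] [DecidableEq α]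

/-- Total Hamming distance from a finite set of strings to a string. -/
def setDist (T : Finset (Fin ℓ → α)) (x : Fin ℓ → α) : ℕ :=
  ∑ s ∈ T, hammingDist s x

/-!
The removed strings are the farthest from `x`, so the average distance of the kept ones is at most
the average over all of `Sx`. Having removed at least an `ε`-fraction of the strings, the kept ones
therefore carry at most a `(1 - ε)`-fraction of `d(Sx, x) ≤ (1 + ε) d`, and the consensus string
of `S''` does at least as well as `x`.
-/

section RemovingLargest

variable {ι R : Type*} {f : ι → R} {s t : Finset ι}

theorem card_mul_sum_le_card_mul_sum_of_forall_le [CommSemiring R] [PartialOrder R]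
    [IsOrderedRing R] {u v : Finset ι} (h : ∀ a ∈ u, ∀ b ∈ v, f a ≤ f b) :
    #v * ∑ a ∈ u, f a ≤ #u * ∑ b ∈ v, f b :=
  calc #v * ∑ a ∈ u, f a = ∑ _b ∈ v, ∑ a ∈ u, f a := by rw [sum_const, nsmul_eq_mul]
    _ ≤ ∑ b ∈ v, ∑ _a ∈ u, f b := sum_le_sum fun b hb => sum_le_sum fun a ha => h a ha b hb
    _ = #u * ∑ b ∈ v, f b := by simp only [sum_const, nsmul_eq_mul, mul_sum]

theorem card_mul_sum_le_card_mul_sum_of_subset [DecidableEq ι] [CommSemiring R] [PartialOrder R]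
    [IsOrderedRing R] (hst : s ⊆ t) (hfar : ∀ a ∈ s, ∀ b ∈ t \ s, f a ≤ f b) :
    #t * ∑ a ∈ s, f a ≤ #s * ∑ a ∈ t, f a := by
  have hcard : #t = #(t \ s) + #s := (card_sdiff_add_card_eq_card hst).symm
  rw [← sum_sdiff hst, hcard, Nat.cast_add, add_mul, mul_add]
  exact add_le_add_left (card_mul_sum_le_card_mul_sum_of_forall_le hfar) _

theorem sum_le_one_sub_mul_sum_of_subset [DecidableEq ι] [Field R] [LinearOrder R] [IsStrictOrderedRing R]
    {ε : R} (hf : ∀ a ∈ t, 0 ≤ f a) (hst : s ⊆ t) (hfar : ∀ a ∈ s, ∀ b ∈ t \ s, f a ≤ f b)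
    (hremoved : ε * #t ≤ #(t \ s)) :
    ∑ a ∈ s, f a ≤ (1 - ε) * ∑ a ∈ t, f a := by
  rcases t.eq_empty_or_nonempty with rfl | ht
  · simp [subset_empty.mp hst]
  have hkept : (#s : R) ≤ (1 - ε) * #t := by
    rw [← card_sdiff_add_card_eq_card hst, Nat.cast_add] at hremoved ⊢
    linarith
  have hsum : 0 ≤ ∑ a ∈ t, f a := sum_nonneg hf
  refine le_of_mul_le_mul_left ?_ (Nat.cast_pos.mpr ht.card_pos : (0 : R) < #t)
  calc (#t : R) * ∑ a ∈ s, f a ≤ #s * ∑ a ∈ t, f a :=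
        card_mul_sum_le_card_mul_sum_of_subset hst hfar
    _ ≤ (1 - ε) * #t * ∑ a ∈ t, f a := mul_le_mul_of_nonneg_right hkept hsum
    _ = #t * ((1 - ε) * ∑ a ∈ t, f a) := by ring

end RemovingLargest

/-- Let `0 < ε ≤ 1/2`, `d ≥ 0`, and let `Sx` be `n*` strings with a center `x` satisfying
`d(Sx, x) ≤ (1+ε) d`.  Let `S''` be obtained from `Sx` by removing the `⌈ε n*⌉` strings
farthest from `x`.  Then `d(S'', c(S'')) ≤ d(S'', x) ≤ (1−ε)(1+ε) d ≤ d`, and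
`|S''| ≥ n*(1 − ε) − 1`.  Here `cS T` denotes a consensus string of `T`, i.e. a minimizer
of `d(T, ·)`. -/
theorem removing_farthest_strings_feasible (Sx S'' : Finset (Fin ℓ → α)) (nstar : ℕ)
    (ε d : ℝ) (hε0 : 0 < ε) (hε : ε ≤ 1 / 2) (hd : 0 ≤ d) (x : Fin ℓ → α)
    (cS : Finset (Fin ℓ → α) → Fin ℓ → α)
    (hcS : ∀ T : Finset (Fin ℓ → α), ∀ y : Fin ℓ → α, setDist T (cS T) ≤ setDist T y)
    (hcard : Sx.card = nstar) (hx : (setDist Sx x : ℝ) ≤ (1 + ε) * d)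
    (hsub : S'' ⊆ Sx) (hcard'' : S''.card = nstar - ⌈ε * nstar⌉₊)
    (hfar : ∀ s ∈ S'', ∀ t ∈ Sx \ S'', hammingDist s x ≤ hammingDist t x) :
    (setDist S'' (cS S'') : ℝ) ≤ (setDist S'' x : ℝ) ∧
      (setDist S'' x : ℝ) ≤ (1 - ε) * (1 + ε) * d ∧
      (1 - ε) * (1 + ε) * d ≤ d ∧
      (nstar : ℝ) * (1 - ε) - 1 ≤ (S''.card : ℝ) := by
  have hceil_le : ⌈ε * nstar⌉₊ ≤ nstar :=
    Nat.ceil_le.mpr (by nlinarith [(Nat.cast_nonneg nstar : (0 : ℝ) ≤ nstar)])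
  have hcard_kept : (S''.card : ℝ) = nstar - ⌈ε * nstar⌉₊ := by
    rw [hcard'', Nat.cast_sub hceil_le]
  have hremoved : ε * Sx.card ≤ (Sx \ S'').card := by
    rw [card_sdiff_of_subset hsub, hcard, hcard'', Nat.sub_sub_self hceil_le]
    exact Nat.le_ceil _
  have hkept : (setDist S'' x : ℝ) ≤ (1 - ε) * setDist Sx x := by
    simp only [setDist, Nat.cast_sum]
    exact sum_le_one_sub_mul_sum_of_subset (fun _ _ => Nat.cast_nonneg _) hsub
      (fun s hs t ht => Nat.cast_le.mpr (hfar s hs t ht)) hremoved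
  refine ⟨Nat.cast_le.mpr (hcS S'' x), ?_, ?_, ?_⟩
  · calc (setDist S'' x : ℝ) ≤ (1 - ε) * setDist Sx x := hkept
      _ ≤ (1 - ε) * ((1 + ε) * d) := mul_le_mul_of_nonneg_left hx (by linarith)
      _ = (1 - ε) * (1 + ε) * d := by ring
  · nlinarith [mul_nonneg hd (sq_nonneg ε)]
  · have := Nat.ceil_lt_add_one (by positivity : 0 ≤ ε * nstar)
    rw [hcard_kept]
    linarith
end

section
/- Let \vec v be a vector of positive integers with entries summing to n*, such that the entries not equal to 1 sum to at most k−1, and \vec v is not the vector having one single entry equal to k−1 (and all remaining entries 1). Let X_{\vec v} = \vec W · \vec v where \vec W is uniform in {−1,1}^{dim(\vec v)} with independent coordinates. Then E[|X_{\vec v}|] < x^{k−1}_{n*−k+1,0}, where x^{k−1}_{n*−k+1,0} is the expected absolute endpoint of a simple ±1 random walk of n*−k+1 steps started at k−1. -/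
open Finset

/-!
Write `meanAbsWalk l c` for the mean of `|c ± l₁ ± ⋯ ± lₙ|` over independent fair signs.
For `t ≥ 0`, `meanAbsWalk l (c + t) + meanAbsWalk l (c - t)` is nondecreasing in `t`, so
replacing two nonnegative steps `a, b` by the single step `a + b` cannot decrease the mean: the
pair of positions `c ± (a - b)` is pushed out to `c ± (a + b)`. Merging all entries of `v` other
than `1`, together with enough `1`s to reach the total `k - 1`, into one step leaves `n* - k + 1`
unit steps, i.e. the simple walk started at `k - 1`. Unless `v` is the excluded vector at least
two entries are merged, and the last merge is strict because for the simple walk `meanAbsWalk`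
strictly increases from `t ≥ 0` to `t + 2`.
-/

noncomputable def meanAbsWalk : List ℝ → ℝ → ℝ
  | [], c => |c|
  | a :: l, c => (meanAbsWalk l (c + a) + meanAbsWalk l (c - a)) / 2

@[simp] lemma meanAbsWalk_nil (c : ℝ) : meanAbsWalk [] c = |c| := rfl

lemma meanAbsWalk_cons (a : ℝ) (l : List ℝ) (c : ℝ) :
    meanAbsWalk (a :: l) c = (meanAbsWalk l (c + a) + meanAbsWalk l (c - a)) / 2 := rfl

lemma meanAbsWalk_neg (l : List ℝ) (c : ℝ) : meanAbsWalk l (-c) = meanAbsWalk l c := by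
  induction l generalizing c with
  | nil => simp
  | cons a l ih =>
    rw [meanAbsWalk_cons, meanAbsWalk_cons, show -c + a = -(c - a) by ring,
      show -c - a = -(c + a) by ring, ih, ih, add_comm]

lemma meanAbsWalk_abs (l : List ℝ) (c : ℝ) : meanAbsWalk l |c| = meanAbsWalk l c := by
  rcases abs_choice c with h | h <;> rw [h]
  exact meanAbsWalk_neg l c

lemma meanAbsWalk_cons_zero (a : ℝ) (l : List ℝ) : meanAbsWalk (a :: l) 0 = meanAbsWalk l a := by
  rw [meanAbsWalk_cons, zero_add, zero_sub, meanAbsWalk_neg, add_self_div_two]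

lemma List.Perm.meanAbsWalk_eq {l l' : List ℝ} (h : l.Perm l') (c : ℝ) :
    meanAbsWalk l c = meanAbsWalk l' c := by
  induction h generalizing c with
  | nil => rfl
  | cons a _ ih => simp only [meanAbsWalk_cons, ih]
  | swap a b l =>
    simp only [meanAbsWalk_cons, add_right_comm _ a b, sub_right_comm _ a b, add_sub_right_comm]
    ring
  | trans _ _ ih₁ ih₂ => rw [ih₁, ih₂]

lemma sum_abs_add_signed_sum (m : ℕ) (x : Fin m → ℝ) (c : ℝ) :
    ∑ w : Fin m → Bool, |c + ∑ j, (if w j then x j else -x j)| =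
      2 ^ m * meanAbsWalk (List.ofFn x) c := by
  induction m generalizing c with
  | zero => simp
  | succ m ih =>
    rw [← (Fin.consEquiv fun _ => Bool).sum_comp, Fintype.sum_prod_type, Fintype.sum_bool]
    simp only [Fin.consEquiv_apply, Fin.sum_univ_succ, Fin.cons_zero, Fin.cons_succ,
      if_true, Bool.false_eq_true, if_false, ← add_assoc, ← sub_eq_add_neg]
    rw [ih (fun j => x j.succ), ih (fun j => x j.succ), List.ofFn_succ, meanAbsWalk_cons, pow_succ]
    ring

lemma walkExp_zero_eq_meanAbsWalk (i : ℤ) (r : ℕ) :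
    walkExp i 0 r = meanAbsWalk (List.replicate r 1) i := by
  have h := sum_abs_add_signed_sum r (fun _ => 1) i
  simp only [List.ofFn_const] at h
  simp [walkExp, Fintype.sum_prod_type, h]

lemma monotoneOn_meanAbsWalk_add_add_sub (l : List ℝ) (c : ℝ) :
    MonotoneOn (fun t => meanAbsWalk l (c + t) + meanAbsWalk l (c - t)) (Set.Ici 0) := by
  induction l generalizing c with
  | nil =>
    intro t ht t' _ htt'
    simp only [Set.mem_Ici, meanAbsWalk_nil] at *
    rcases abs_cases (c + t) with ⟨_, _⟩ | ⟨_, _⟩ <;>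
      rcases abs_cases (c - t) with ⟨_, _⟩ | ⟨_, _⟩ <;>
      rcases abs_cases (c + t') with ⟨_, _⟩ | ⟨_, _⟩ <;>
      rcases abs_cases (c - t') with ⟨_, _⟩ | ⟨_, _⟩ <;> linarith
  | cons a l ih =>
    intro t ht t' ht' htt'
    have h₁ := ih (c + a) ht ht' htt'
    have h₂ := ih (c - a) ht ht' htt'
    simp only [meanAbsWalk_cons, add_right_comm c _ a, add_sub_right_comm c _ a,
      sub_add_eq_add_sub c _ a, sub_right_comm c _ a] at h₁ h₂ ⊢
    linarith

lemma monotoneOn_meanAbsWalk (l : List ℝ) : MonotoneOn (meanAbsWalk l) (Set.Ici 0) := by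
  intro t ht t' ht' htt'
  have := monotoneOn_meanAbsWalk_add_add_sub l 0 ht ht' htt'
  simp only [zero_add, zero_sub, meanAbsWalk_neg] at this
  linarith

lemma meanAbsWalk_cons_cons_le (l : List ℝ) (c : ℝ) {a b : ℝ} (ha : 0 ≤ a) (hb : 0 ≤ b) :
    meanAbsWalk (a :: b :: l) c ≤ meanAbsWalk ((a + b) :: l) c := by
  have hpair : meanAbsWalk l (c + (a - b)) + meanAbsWalk l (c - (a - b)) ≤
      meanAbsWalk l (c + (a + b)) + meanAbsWalk l (c - (a + b)) := by
    have heven : meanAbsWalk l (c + (a - b)) + meanAbsWalk l (c - (a - b)) =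
        meanAbsWalk l (c + |a - b|) + meanAbsWalk l (c - |a - b|) := by
      rcases abs_choice (a - b) with h | h
      · rw [h]
      · rw [h, sub_neg_eq_add, ← sub_eq_add_neg, add_comm]
    rw [heven]
    exact monotoneOn_meanAbsWalk_add_add_sub l c (Set.mem_Ici.2 (abs_nonneg _))
      (Set.mem_Ici.2 (by positivity)) (abs_sub_le_of_nonneg_of_le ha (by linarith) hb (by linarith))
  rw [← add_sub_assoc, sub_sub_eq_add_sub, ← add_assoc, ← sub_sub] at hpair
  simp only [meanAbsWalk_cons, ← add_assoc, ← sub_sub, sub_add_eq_add_sub]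
  linarith

lemma meanAbsWalk_append_le (l : List ℝ) (c : ℝ) {bag : List ℝ} (hbag : ∀ x ∈ bag, 0 ≤ x) :
    meanAbsWalk (bag ++ l) c ≤ meanAbsWalk (bag.sum :: l) c := by
  induction bag generalizing c with
  | nil => simp [meanAbsWalk_cons]
  | cons a rest ih =>
    have ha := hbag a List.mem_cons_self
    have hrest : ∀ x ∈ rest, 0 ≤ x := fun x hx => hbag x (List.mem_cons_of_mem a hx)
    calc meanAbsWalk (a :: (rest ++ l)) c
        ≤ meanAbsWalk (a :: rest.sum :: l) c := by
          simp only [meanAbsWalk_cons]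
          gcongr <;> exact ih _ hrest
      _ ≤ meanAbsWalk ((a + rest.sum) :: l) c :=
          meanAbsWalk_cons_cons_le l c ha (List.sum_nonneg hrest)

lemma meanAbsWalk_replicate_one_lt (r : ℕ) {t t' : ℝ} (ht : 0 ≤ t) (htt' : t + 2 ≤ t') :
    meanAbsWalk (List.replicate r 1) t < meanAbsWalk (List.replicate r 1) t' := by
  induction r generalizing t t' with
  | zero =>
    simp only [List.replicate_zero, meanAbsWalk_nil, abs_of_nonneg ht,
      abs_of_nonneg (by linarith : 0 ≤ t')]
    linarith
  | succ r ih =>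
    have h₁ := ih (by linarith : 0 ≤ t + 1) (by linarith : t + 1 + 2 ≤ t' + 1)
    have h₂ :
        meanAbsWalk (List.replicate r 1) |t - 1| ≤ meanAbsWalk (List.replicate r 1) (t' - 1) :=
      monotoneOn_meanAbsWalk _ (Set.mem_Ici.2 (abs_nonneg _)) (Set.mem_Ici.2 (by linarith))
        (abs_sub_le_iff.2 ⟨by linarith, by linarith⟩)
    rw [meanAbsWalk_abs] at h₂
    rw [List.replicate_succ, meanAbsWalk_cons, meanAbsWalk_cons]
    linarith

lemma meanAbsWalk_cons_cons_replicate_one_lt (r : ℕ) {p q : ℝ} (hp : 1 ≤ p) (hq : 1 ≤ q) :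
    meanAbsWalk (p :: q :: List.replicate r 1) 0 <
      meanAbsWalk ((p + q) :: List.replicate r 1) 0 := by
  have h : meanAbsWalk (List.replicate r 1) |p - q| < meanAbsWalk (List.replicate r 1) (p + q) :=
    meanAbsWalk_replicate_one_lt r (abs_nonneg _) (by cases abs_cases (p - q) <;> linarith)
  rw [meanAbsWalk_abs] at h
  rw [meanAbsWalk_cons_zero, meanAbsWalk_cons_zero, meanAbsWalk_cons]
  linarith

lemma meanAbsWalk_append_replicate_one_lt (r : ℕ) {bag : List ℝ} (hlen : 2 ≤ bag.length)
    (hbag : ∀ x ∈ bag, 1 ≤ x) :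
    meanAbsWalk (bag ++ List.replicate r 1) 0 < meanAbsWalk (bag.sum :: List.replicate r 1) 0 := by
  obtain ⟨p, q, rest, rfl⟩ : ∃ p q rest, bag = p :: q :: rest := by
    match bag, hlen with
    | p :: q :: rest, _ => exact ⟨p, q, rest, rfl⟩
  have hp := hbag p (by simp)
  have hq := hbag q (by simp)
  have hrest : ∀ x ∈ rest, 0 ≤ x := fun x hx => by linarith [hbag x (by simp [hx])]
  calc meanAbsWalk (p :: (q :: rest ++ List.replicate r 1)) 0
      = meanAbsWalk (q :: rest ++ List.replicate r 1) p := meanAbsWalk_cons_zero _ _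
    _ ≤ meanAbsWalk ((q + rest.sum) :: List.replicate r 1) p :=
        meanAbsWalk_append_le _ p (by simpa using ⟨by linarith, hrest⟩)
    _ < meanAbsWalk ((p + (q + rest.sum)) :: List.replicate r 1) 0 := by
        rw [← meanAbsWalk_cons_zero]
        exact meanAbsWalk_cons_cons_replicate_one_lt r hp (by linarith [List.sum_nonneg hrest])
    _ = meanAbsWalk ((p :: q :: rest).sum :: List.replicate r 1) 0 := by simp

lemma List.ofFn_perm_map_toList_filter_append {α : Type*} {m : ℕ} (f : Fin m → α)
    (p : Fin m → Prop) [DecidablePred p] :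
    (List.ofFn f).Perm
      ((univ.filter p).toList.map f ++ (univ.filter fun j => ¬p j).toList.map f) := by
  rw [← Multiset.coe_eq_coe, ← Multiset.coe_add, ← Multiset.map_coe, ← Multiset.map_coe,
    coe_toList, coe_toList, ← Multiset.map_add, filter_val, filter_val, Multiset.filter_add_not,
    Fin.univ_val_map]

lemma card_filter_eq_one_add_sum_filter_ne_one {ι : Type*} [Fintype ι] (v : ι → ℕ) :
    #(univ.filter fun j => v j = 1) + ∑ j ∈ univ.filter (fun j => v j ≠ 1), v j = ∑ j, v j := by
  rw [← sum_filter_add_sum_filter_not univ (fun j => v j ≠ 1), add_comm, card_eq_sum_ones]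
  congr 1
  simp only [ne_eq, not_not]
  exact sum_congr rfl fun j hj => ((mem_filter.1 hj).2).symm

/-- The vector `v'` of the paper. -/
noncomputable def paddedLargeEntries {ι : Type*} [Fintype ι] (v : ι → ℕ) (k : ℕ) : List ℝ :=
  (univ.filter fun j => v j ≠ 1).toList.map (fun j => (v j : ℝ)) ++
    List.replicate (k - 1 - ∑ j ∈ univ.filter (fun j => v j ≠ 1), v j) 1

section paddedLargeEntries

variable {ι : Type*} [Fintype ι] (v : ι → ℕ) {k : ℕ}

lemma sum_paddedLargeEntries (hk : 1 ≤ k)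
    (hbig : ∑ j ∈ univ.filter (fun j => v j ≠ 1), v j ≤ k - 1) :
    (paddedLargeEntries v k).sum = k - 1 := by
  simp only [paddedLargeEntries, List.sum_append, sum_map_toList, List.sum_replicate,
    nsmul_eq_mul, mul_one]
  rw [Nat.cast_sub hbig, Nat.cast_sub hk]
  push_cast
  ring

lemma one_le_of_mem_paddedLargeEntries (hpos : ∀ j, 0 < v j) :
    ∀ x ∈ paddedLargeEntries v k, 1 ≤ x := by
  simp only [paddedLargeEntries, List.mem_append, List.mem_map, mem_toList, List.mem_replicate]
  rintro x (⟨j, -, rfl⟩ | ⟨-, rfl⟩)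
  · exact_mod_cast hpos j
  · exact le_rfl

lemma two_le_length_paddedLargeEntries (hk : 2 ≤ k) (hkv : k ≤ ∑ j, v j)
    (hbig : ∑ j ∈ univ.filter (fun j => v j ≠ 1), v j ≤ k - 1)
    (hne : ¬ ∃ j, v j = k - 1 ∧ ∀ j', j' ≠ j → v j' = 1) :
    2 ≤ (paddedLargeEntries v k).length := by
  simp only [paddedLargeEntries, List.length_append, List.length_map, length_toList,
    List.length_replicate]
  set S := univ.filter fun j => v j ≠ 1
  have hout : ∀ j, j ∉ S → v j = 1 := by simp [S]
  by_contra! hlt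
  obtain hS | hS : #S = 0 ∨ #S = 1 := by omega
  · have hall : ∀ j, v j = 1 := fun j => hout j (by simp [card_eq_zero.1 hS])
    have hB : ∑ j ∈ S, v j = 0 := by simp [card_eq_zero.1 hS]
    simp only [hall, sum_const, card_univ, smul_eq_mul, mul_one] at hkv
    obtain ⟨j⟩ : Nonempty ι := Fintype.card_pos_iff.1 (by omega)
    exact hne ⟨j, by rw [hall j]; omega, fun j' _ => hall j'⟩
  · obtain ⟨j, hj⟩ := card_eq_one.1 hS
    rw [hj, sum_singleton] at hbig
    rw [hS, hj, sum_singleton] at hlt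
    exact hne ⟨j, by omega, fun j' hj' => hout j' (by simp [hj, hj'])⟩

end paddedLargeEntries

lemma ofFn_perm_paddedLargeEntries_append {m k : ℕ} (v : Fin m → ℕ) (hk : 1 ≤ k)
    (hkv : k ≤ ∑ j, v j) (hbig : ∑ j ∈ univ.filter (fun j => v j ≠ 1), v j ≤ k - 1) :
    (List.ofFn fun j => (v j : ℝ)).Perm
      (paddedLargeEntries v k ++ List.replicate (∑ j, v j - k + 1) 1) := by
  have hcount := card_filter_eq_one_add_sum_filter_ne_one v
  rw [paddedLargeEntries, List.append_assoc, ← List.replicate_add]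
  convert List.ofFn_perm_map_toList_filter_append (fun j => (v j : ℝ)) (fun j => v j ≠ 1)
    using 2
  refine (List.eq_replicate_iff.2 ⟨?_, by simp +contextual⟩).symm
  simp only [List.length_map, length_toList, ne_eq, not_not] at hcount hbig ⊢
  omega

/-- Let `v` be a vector of positive integers summing to `n*`, whose entries not equal to
`1` sum to at most `k − 1`, and which is not the vector with a single entry `k − 1` and
all other entries `1`.  If `X_v = W · v` with `W` uniform in `{−1,1}^{dim v}` with
independent coordinates, then `E[|X_v|] < x^{k−1}_{n*−k+1,0}`, the expected absolute
endpoint of a simple ±1 random walk of `n*−k+1` steps started at `k−1`. -/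
theorem weighted_walk_lt_special (k nstar m : ℕ) (hk : 2 ≤ k) (hkn : k ≤ nstar)
    (v : Fin m → ℕ) (hpos : ∀ j, 0 < v j) (hsum : ∑ j, v j = nstar)
    (hbig : ∑ j ∈ Finset.univ.filter (fun j => v j ≠ 1), v j ≤ k - 1)
    (hne : ¬ ∃ j, v j = k - 1 ∧ ∀ j', j' ≠ j → v j' = 1) :
    (∑ w : Fin m → Bool, |∑ j, (if w j then (v j : ℝ) else -(v j : ℝ))|) / 2 ^ m <
      walkExp ((k : ℤ) - 1) 0 (nstar - k + 1) := by
  subst hsum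
  have hLHS := sum_abs_add_signed_sum m (fun j => (v j : ℝ)) 0
  simp only [zero_add] at hLHS
  calc (∑ w : Fin m → Bool, |∑ j, (if w j then (v j : ℝ) else -(v j : ℝ))|) / 2 ^ m
      = meanAbsWalk (paddedLargeEntries v k ++ List.replicate (∑ j, v j - k + 1) 1) 0 := by
        rw [hLHS, mul_div_cancel_left₀ _ (by positivity),
          (ofFn_perm_paddedLargeEntries_append v (by omega) hkn hbig).meanAbsWalk_eq]
    _ < meanAbsWalk ((paddedLargeEntries v k).sum :: List.replicate (∑ j, v j - k + 1) 1) 0 :=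
        meanAbsWalk_append_replicate_one_lt _ (two_le_length_paddedLargeEntries v hk hkn hbig hne)
          (one_le_of_mem_paddedLargeEntries v hpos)
    _ = walkExp ((k : ℤ) - 1) 0 (∑ j, v j - k + 1) := by
        rw [meanAbsWalk_cons_zero, walkExp_zero_eq_meanAbsWalk,
          sum_paddedLargeEntries v (by omega) hbig]
        norm_num
end
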